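/- For every k ≥ 1, the prefix of the Thue–Morse word t of length 8k is an irreducible overlap-free word; consequently, deleting any single letter of t at a position other than the first creates an overlap. -/

import Mathlib

/-- An overlap is a word of the form xYxYx where x is a letter and Y is a
possibly empty word. -/
def IsOverlap {α : Type*} (w : List α) : Prop :=
  ∃ (x : α) (Y : List α), w = [x] ++ Y ++ [x] ++ Y ++ [x]

/-- A word contains an overlap if some factor (contiguous subword) of it is an overlap. -/
def HasOverlap {α : Type*} (w : List α) : Prop :=
  ∃ u, u <:+: w ∧ IsOverlap u

/-- A word is overlap-free if none of its factors is an overlap. -/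
def OverlapFree {α : Type*} (w : List α) : Prop := ¬ HasOverlap w

/-- An irreducible overlap-free word: an overlap-free word of length at least 3
such that removing any one interior letter creates an overlap. -/
def IrreducibleOverlapFree (w : List (Fin 2)) : Prop :=
  OverlapFree w ∧ 3 ≤ w.length ∧
    ∀ i : ℕ, 0 < i → i + 1 < w.length → HasOverlap (w.eraseIdx i)

open Fin.NatCast in
/-- The Thue–Morse word: the n-th letter (0-indexed) is the parity of the number
of 1s in the binary expansion of n. -/
def thueMorse (n : ℕ) : Fin 2 := ((Nat.digits 2 n).sum : Fin 2)

/-- The finite prefix of length n of an infinite word. -/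
def wordPrefix {α : Type*} (s : ℕ → α) (n : ℕ) : List α := (List.range n).map s

/-!
An overlap in a word is a factor of length `2p + 1` with period `p`. If `t` had one, then for even
`p` the relation `t (2n) = t n` halves it to an overlap of period `p / 2`, and for odd `p ≥ 3` the
relations `t (2n) = t n`, `t (2n + 1) = t n + 1` force a factor `aaa`, which is impossible because
`t (2n) ≠ t (2n + 1)`. So every prefix of `t` is overlap-free.

The prefix of length `8k` is `μ³(t₀) ⋯ μ³(t_{k-1})`, and `μ³(a)` is `01101001` or its complement.
An interior letter lies either strictly inside one block, or at the junction of two adjacent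
blocks; deleting it creates an overlap inside that block, resp. inside those two blocks, which is a
finite check.
-/

section Words

variable {α : Type*}

theorem isOverlap_iff {u : List α} :
    IsOverlap u ↔ ∃ p, 0 < p ∧ u.length = 2 * p + 1 ∧ ∀ j ≤ p, u[j]? = u[j + p]? := by
  constructor
  · rintro ⟨x, Y, rfl⟩
    refine ⟨Y.length + 1, by omega, by simp; omega, fun j hj => ?_⟩
    have hfst : ([x] ++ Y ++ [x] ++ Y ++ [x])[j]? = (x :: Y ++ [x])[j]? := by
      rw [show [x] ++ Y ++ [x] ++ Y ++ [x] = (x :: Y ++ [x]) ++ (Y ++ [x]) by simp,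
        List.getElem?_append_left (by simp; omega)]
    have hsnd : ([x] ++ Y ++ [x] ++ Y ++ [x])[j + (Y.length + 1)]? = (x :: Y ++ [x])[j]? := by
      rw [show [x] ++ Y ++ [x] ++ Y ++ [x] = (x :: Y) ++ (x :: Y ++ [x]) by simp,
        List.getElem?_append_right (by simp)]
      simp
    rw [hfst, hsnd]
  · rintro ⟨p, hp, hlen, hper⟩
    have hdrop : u.drop p = u.take (p + 1) := by
      apply List.ext_getElem?
      intro j
      rw [List.getElem?_drop]
      rcases Nat.lt_or_ge p j with hj | hj
      · rw [List.getElem?_eq_none (by omega), List.getElem?_eq_none (by simp; omega)]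
      · rw [List.getElem?_take_of_lt (by omega), hper j hj, Nat.add_comm]
    obtain ⟨x, Y, hxY⟩ : ∃ x Y, u.take p = x :: Y :=
      List.exists_cons_of_ne_nil (List.ne_nil_of_length_pos (by simp; omega))
    have hlast : u[p]? = some x := by
      rw [← Nat.zero_add p, ← hper 0 (Nat.zero_le p), ← List.getElem?_take_of_lt hp, hxY]; rfl
    refine ⟨x, Y, ?_⟩
    rw [← List.take_append_drop p u, hdrop, List.take_add_one, hlast, hxY]
    simp

theorem hasOverlap_iff {w : List α} :
    HasOverlap w ↔ ∃ m p, 0 < p ∧ m + 2 * p < w.length ∧ ∀ j ≤ p, w[m + j]? = w[m + j + p]? := by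
  constructor
  · rintro ⟨u, hu, hov⟩
    obtain ⟨m, hm, hw⟩ := List.infix_iff_getElem?.mp hu
    obtain ⟨p, hp, hlen, hper⟩ := isOverlap_iff.mp hov
    have hwu : ∀ j < u.length, w[m + j]? = u[j]? := fun j hj => by
      rw [Nat.add_comm, hw j hj, List.getElem?_eq_getElem hj]
    refine ⟨m, p, hp, by omega, fun j hj => ?_⟩
    rw [hwu j (by omega), Nat.add_assoc, hwu (j + p) (by omega), hper j hj]
  · rintro ⟨m, p, hp, hlen, hper⟩
    refine ⟨(w.drop m).take (2 * p + 1), ((w.drop m).take_prefix _).isInfix.trans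
      (w.drop_suffix m).isInfix, isOverlap_iff.mpr ⟨p, hp, by simp; omega, fun j hj => ?_⟩⟩
    rw [List.getElem?_take_of_lt (by omega), List.getElem?_take_of_lt (by omega),
      List.getElem?_drop, List.getElem?_drop, ← Nat.add_assoc, hper j hj]

instance [DecidableEq α] : DecidablePred (HasOverlap (α := α)) := fun w =>
  decidable_of_iff (∃ m < w.length, ∃ p < w.length,
      0 < p ∧ m + 2 * p < w.length ∧ ∀ j ≤ p, w[m + j]? = w[m + j + p]?) <| by
    rw [hasOverlap_iff]
    constructor
    · rintro ⟨m, -, p, -, h⟩; exact ⟨m, p, h⟩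
    · rintro ⟨m, p, hp, hlen, h⟩; exact ⟨m, by omega, p, by omega, hp, hlen, h⟩

theorem HasOverlap.mono {u w : List α} (h : HasOverlap u) (huw : u <:+: w) : HasOverlap w :=
  let ⟨v, hv, hov⟩ := h
  ⟨v, hv.trans huw, hov⟩

theorem getElem?_wordPrefix {s : ℕ → α} {n i : ℕ} (h : i < n) :
    (wordPrefix s n)[i]? = some (s i) := by
  simp [wordPrefix, h]

theorem wordPrefix_add (s : ℕ → α) (m n : ℕ) :
    wordPrefix s (m + n) = wordPrefix s m ++ wordPrefix (fun i => s (m + i)) n := by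
  simp [wordPrefix, List.range_add]

end Words

open Fin.NatCast in
theorem thueMorse_eq_div_two_add (n : ℕ) :
    thueMorse n = thueMorse (n / 2) + ((n % 2 : ℕ) : Fin 2) := by
  rcases Nat.eq_zero_or_pos n with rfl | hn
  · rfl
  · rw [thueMorse, Nat.digits_def' (by norm_num) hn, List.sum_cons, thueMorse, Nat.cast_add,
      add_comm]

@[simp]
theorem thueMorse_two_mul (n : ℕ) : thueMorse (2 * n) = thueMorse n := by
  rw [thueMorse_eq_div_two_add]; simp

@[simp]
theorem thueMorse_two_mul_add_one (n : ℕ) : thueMorse (2 * n + 1) = thueMorse n + 1 := by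
  rw [thueMorse_eq_div_two_add]; simp [Nat.add_div]

theorem thueMorse_two_pow_mul_add (k n s : ℕ) (hs : s < 2 ^ k) :
    thueMorse (2 ^ k * n + s) = thueMorse n + thueMorse s := by
  induction k generalizing s with
  | zero => simp only [pow_zero, Nat.lt_one_iff] at hs; simp [hs]; rfl
  | succ k ih =>
    rw [show 2 ^ (k + 1) * n + s = 2 * (2 ^ k * n) + s by ring, thueMorse_eq_div_two_add,
      thueMorse_eq_div_two_add s, show (2 * (2 ^ k * n) + s) / 2 = 2 ^ k * n + s / 2 by omega,
      show (2 * (2 ^ k * n) + s) % 2 = s % 2 by omega,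
      ih _ (by rw [pow_succ] at hs; omega), add_assoc]

theorem thueMorse_div_two_eq {n n' : ℕ} (hmod : n % 2 = n' % 2)
    (h : thueMorse n = thueMorse n') :
    thueMorse (n / 2) = thueMorse (n' / 2) := by
  rwa [thueMorse_eq_div_two_add n, thueMorse_eq_div_two_add n', hmod, add_left_inj] at h

theorem thueMorse_not_cube (n : ℕ) :
    ¬ (thueMorse n = thueMorse (n + 1) ∧ thueMorse (n + 1) = thueMorse (n + 2)) := by
  rintro ⟨h₁, h₂⟩
  obtain ⟨c, rfl | rfl⟩ := Nat.even_or_odd' n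
  · simp at h₁
  · rw [show 2 * c + 1 + 1 = 2 * (c + 1) by ring,
      show 2 * c + 1 + 2 = 2 * (c + 1) + 1 by ring] at h₂
    simp at h₂

theorem thueMorse_eq_succ_of_even_odd_pair {x y b : ℕ} (hx : x % 2 = 0) (hy : y = 2 * b + 1)
    (h₀ : thueMorse x = thueMorse y) (h₁ : thueMorse (x + 1) = thueMorse (y + 1)) :
    thueMorse b = thueMorse (b + 1) := by
  obtain ⟨c, rfl⟩ : ∃ c, x = 2 * c := ⟨x / 2, by omega⟩
  subst hy
  rw [show 2 * b + 1 + 1 = 2 * (b + 1) by ring] at h₁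
  simp only [thueMorse_two_mul, thueMorse_two_mul_add_one] at h₀ h₁
  revert h₀ h₁
  generalize thueMorse b = u, thueMorse c = v, thueMorse (b + 1) = w
  revert u v w
  decide

theorem thueMorse_not_periodic (p m : ℕ) (hp : 0 < p) :
    ¬ ∀ j ≤ p, thueMorse (m + j) = thueMorse (m + j + p) := by
  induction p using Nat.strong_induction_on generalizing m with
  | _ p ih =>
    intro H
    obtain ⟨q, rfl | rfl⟩ := Nat.even_or_odd' p
    · refine ih q (by omega) (m / 2) (by omega) fun j hj => ?_
      have := thueMorse_div_two_eq (by omega) (H (2 * j) (by omega))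
      rwa [show (m + 2 * j) / 2 = m / 2 + j by omega,
        show (m + 2 * j + 2 * q) / 2 = m / 2 + j + q by omega] at this
    · rcases Nat.eq_zero_or_pos q with rfl | hq
      · exact thueMorse_not_cube m ⟨H 0 (by omega), H 1 (by omega)⟩
      have H' : ∀ j ≤ 3, thueMorse (m + j) = thueMorse (m + (2 * q + 1) + j) := fun j hj => by
        rw [add_right_comm]; exact H j (by omega)
      -- a shift by an odd amount pairs even positions with odd ones
      obtain ⟨b, hb₀, hb₁⟩ : ∃ b, thueMorse b = thueMorse (b + 1) ∧
          thueMorse (b + 1) = thueMorse (b + 2) := by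
        rcases Nat.mod_two_eq_zero_or_one m with hm | hm
        · exact ⟨(m + 2 * q + 1) / 2,
            thueMorse_eq_succ_of_even_odd_pair hm (by omega) (H' 0 (by omega)) (H' 1 (by omega)),
            thueMorse_eq_succ_of_even_odd_pair (x := m + 2) (y := m + (2 * q + 1) + 2) (by omega)
              (by omega) (H' 2 (by omega)) (H' 3 (by omega))⟩
        · exact ⟨m / 2,
            thueMorse_eq_succ_of_even_odd_pair (y := m) (by omega) (by omega)
              (H' 0 (by omega)).symm (H' 1 (by omega)).symm,
            thueMorse_eq_succ_of_even_odd_pair (x := m + (2 * q + 1) + 2) (y := m + 2) (by omega)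
              (by omega) (H' 2 (by omega)).symm (H' 3 (by omega)).symm⟩
      exact thueMorse_not_cube b ⟨hb₀, hb₁⟩

theorem overlapFree_wordPrefix_thueMorse (n : ℕ) : OverlapFree (wordPrefix thueMorse n) := by
  rw [OverlapFree, hasOverlap_iff]
  rintro ⟨m, p, hp, hlen, H⟩
  simp only [wordPrefix, List.length_map, List.length_range] at hlen
  refine thueMorse_not_periodic p m hp fun j hj => ?_
  have h := H j hj
  rwa [getElem?_wordPrefix (by omega), getElem?_wordPrefix (by omega), Option.some_inj] at h

/-- `tmBlock a` is `μ³(a)`. -/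
def tmBlock (a : Fin 2) : List (Fin 2) := (wordPrefix thueMorse 8).map (a + ·)

@[simp]
theorem length_tmBlock (a : Fin 2) : (tmBlock a).length = 8 := rfl

theorem wordPrefix_thueMorse_eight_mul (k : ℕ) :
    wordPrefix thueMorse (8 * k) = (wordPrefix thueMorse k).flatMap tmBlock := by
  induction k with
  | zero => rfl
  | succ k ih =>
    have hblock : wordPrefix (fun s => thueMorse (8 * k + s)) 8 = tmBlock (thueMorse k) := by
      refine (List.map_congr_left fun s hs => ?_).trans (List.map_map ..).symm
      exact thueMorse_two_pow_mul_add 3 k s (by simpa using hs)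
    rw [mul_add, mul_one, wordPrefix_add, ih, hblock, wordPrefix_add thueMorse k 1,
      List.flatMap_append]
    simp [wordPrefix]

theorem hasOverlap_eraseIdx_tmBlock (a : Fin 2) {i : ℕ} (h₀ : 0 < i) (h₇ : i < 7) :
    HasOverlap ((tmBlock a).eraseIdx i) := by
  suffices ∀ a : Fin 2, ∀ i < 7, 0 < i → HasOverlap ((tmBlock a).eraseIdx i) from
    this a i h₇ h₀
  decide

theorem hasOverlap_eraseIdx_tmBlock_append (a c : Fin 2) {i : ℕ} (h₀ : 0 < i) (h₈ : i ≤ 8) :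
    HasOverlap ((tmBlock a ++ tmBlock c).eraseIdx i) := by
  suffices ∀ a c : Fin 2, ∀ i ≤ 8, 0 < i → HasOverlap ((tmBlock a ++ tmBlock c).eraseIdx i) from
    this a c i h₈ h₀
  decide

theorem hasOverlap_eraseIdx_flatMap_tmBlock (w : List (Fin 2)) {i : ℕ} (h₀ : 0 < i)
    (hi : i + 1 < 8 * w.length) : HasOverlap ((w.flatMap tmBlock).eraseIdx i) := by
  induction w generalizing i with
  | nil => simp at hi
  | cons a w ih =>
    rcases w with _ | ⟨c, w⟩
    · simpa using hasOverlap_eraseIdx_tmBlock a h₀ (by simp at hi; omega)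
    rcases Nat.lt_or_ge 8 i with h₈ | h₈
    · rw [List.flatMap_cons, List.eraseIdx_append_of_length_le (by simp; omega), length_tmBlock]
      exact (ih (by omega) (by simp at hi ⊢; omega)).mono (List.suffix_append _ _).isInfix
    · rw [List.flatMap_cons, List.flatMap_cons, ← List.append_assoc,
        List.eraseIdx_append_of_lt_length (by simp; omega)]
      exact (hasOverlap_eraseIdx_tmBlock_append a c h₀ h₈).mono (List.prefix_append _ _).isInfix

theorem irreducibleOverlapFree_wordPrefix_thueMorse {k : ℕ} (hk : 1 ≤ k) :
    IrreducibleOverlapFree (wordPrefix thueMorse (8 * k)) := by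
  have hlen : (wordPrefix thueMorse (8 * k)).length = 8 * k := by simp [wordPrefix]
  refine ⟨overlapFree_wordPrefix_thueMorse _, by omega, fun i h₀ hi => ?_⟩
  rw [wordPrefix_thueMorse_eight_mul]
  exact hasOverlap_eraseIdx_flatMap_tmBlock _ h₀ (by simpa [wordPrefix] using hi)

theorem thueMorse_prefix_irreducible :
    (∀ k : ℕ, 1 ≤ k → IrreducibleOverlapFree (wordPrefix thueMorse (8 * k))) ∧
    (∀ i : ℕ, 0 < i → ∃ n : ℕ, HasOverlap ((wordPrefix thueMorse n).eraseIdx i)) :=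
  ⟨fun _ => irreducibleOverlapFree_wordPrefix_thueMorse, fun i hi =>
    ⟨8 * (i + 1), (irreducibleOverlapFree_wordPrefix_thueMorse (by omega)).2.2 i hi
      (by simp [wordPrefix])⟩⟩
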